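/- arXiv:2210.08309 — 4 statements merged into one kernel-verified Lean document; each statement's English description precedes it below -/
import Mathlib

section
/- Let X be a compact metric space. If for every ε > 0 there exists a connected component of X of diameter less than ε which is not a singleton, then for every ε > 0 there exists a continuous non-surjective map f : X → X with sup_{x∈X} d(f(x), x) < ε. -/
/-!
Pick a non-degenerate component `K` of diameter `< ε`. Since components of a compact Hausdorff
space are intersections of clopen sets, `K` lies in a clopen set `V` of diameter `< ε`. Collapsing
`V` to a point of `K` is continuous because `V` is clopen, moves points by at most `diam V`, and
misses the other points of `K`.
-/

open Set Metric Topology Bornology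

lemma exists_isClopen_of_connectedComponent_subset {X : Type*} [TopologicalSpace X]
    [T2Space X] [CompactSpace X] {x : X} {U : Set X} (hU : IsOpen U)
    (hxU : connectedComponent x ⊆ U) :
    ∃ V : Set X, IsClopen V ∧ connectedComponent x ⊆ V ∧ V ⊆ U := by
  let N := { s : Set X // IsClopen s ∧ x ∈ s }
  have : Nonempty N := ⟨⟨univ, isClopen_univ, mem_univ x⟩⟩
  have hdir : Directed (· ⊇ ·) fun s : N => s.val := by
    rintro ⟨s, hs, hxs⟩ ⟨t, ht, hxt⟩
    exact ⟨⟨s ∩ t, hs.inter ht, hxs, hxt⟩, inter_subset_left, inter_subset_right⟩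
  have hU_nhds : ∀ y ∈ ⋂ s : N, s.val, U ∈ 𝓝 y := fun y hy =>
    hU.mem_nhds <| hxU <| (connectedComponent_eq_iInter_isClopen x).symm ▸ hy
  obtain ⟨s, hsU⟩ := exists_subset_nhds_of_compactSpace hdir (fun s => s.2.1.1) hU_nhds
  exact ⟨s.val, s.2.1, s.2.1.connectedComponent_subset s.2.2, hsU⟩

lemma exists_isClopen_diam_lt_of_connectedComponent {X : Type*} [MetricSpace X]
    [CompactSpace X] {x : X} {ε : ℝ} (hε : diam (connectedComponent x) < ε) :
    ∃ V : Set X, IsClopen V ∧ connectedComponent x ⊆ V ∧ diam V < ε := by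
  set r := (ε - diam (connectedComponent x)) / 3
  have hr : 0 < r := by simp only [r]; linarith
  obtain ⟨V, hV, hxV, hVU⟩ := exists_isClopen_of_connectedComponent_subset isOpen_thickening
    (self_subset_thickening hr (connectedComponent x))
  refine ⟨V, hV, hxV, ?_⟩
  calc diam V ≤ diam (thickening r (connectedComponent x)) :=
        diam_mono hVU isBounded_of_compactSpace
    _ ≤ diam (connectedComponent x) + 2 * r := diam_thickening_le _ hr.le
    _ < ε := by simp only [r]; linarith

section Collapse

variable {X : Type*} {V : Set X} [DecidablePred (· ∈ V)]

lemma IsClopen.continuous_piecewise_const_id [TopologicalSpace X] (hV : IsClopen V) (x : X) :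
    Continuous (V.piecewise (fun _ => x) id) :=
  continuous_const.piecewise (by simp [hV.frontier_eq]) continuous_id

lemma not_surjective_piecewise_const_id {x y : X} (hyV : y ∈ V) (hyx : y ≠ x) :
    ¬ Function.Surjective (V.piecewise (fun _ => x) id) := by
  intro hsurj
  obtain ⟨z, hz⟩ := hsurj y
  by_cases hzV : z ∈ V
  · exact hyx (by simpa [hzV] using hz.symm)
  · rw [piecewise_eq_of_notMem _ _ _ hzV, id] at hz
    exact hzV (hz ▸ hyV)

lemma dist_piecewise_const_id_le_diam [PseudoMetricSpace X] {x : X} (hxV : x ∈ V)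
    (hV : IsBounded V) (z : X) :
    dist (V.piecewise (fun _ => x) id z) z ≤ diam V := by
  by_cases hzV : z ∈ V
  · simpa [hzV] using dist_le_diam_of_mem hV hxV hzV
  · simpa [hzV] using diam_nonneg

end Collapse

/-- If a compact metric space has, for every `ε > 0`, a connected component of diameter
less than `ε` which is not a singleton, then for every `ε > 0` there is a continuous
non-surjective self-map moving every point by less than `ε`. -/
theorem stmt_7 {X : Type*} [MetricSpace X] [CompactSpace X]
    (h : ∀ ε > (0 : ℝ), ∃ x : X, Metric.diam (connectedComponent x) < ε ∧
      ¬ (connectedComponent x).Subsingleton) :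
    ∀ ε > (0 : ℝ), ∃ f : X → X, Continuous f ∧ ¬ Function.Surjective f ∧
      ∀ x : X, dist (f x) x < ε := by
  classical
  intro ε hε
  obtain ⟨x, hdiam, hnontriv⟩ := h ε hε
  obtain ⟨V, hV, hxV, hVε⟩ := exists_isClopen_diam_lt_of_connectedComponent hdiam
  obtain ⟨y, hy, hyx⟩ := (not_subsingleton_iff.mp hnontriv).exists_ne x
  exact ⟨V.piecewise (fun _ => x) id, hV.continuous_piecewise_const_id x,
    not_surjective_piecewise_const_id (hxV hy) hyx,
    fun z => (dist_piecewise_const_id_le_diam (hxV mem_connectedComponent)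
      isBounded_of_compactSpace z).trans_lt hVε⟩
end

section
/- Let X be a compact metric space with infinitely many isolated points. Then for every ε > 0 there exists a continuous non-surjective map f : X → X with sup_{x∈X} d(f(x), x) < ε. -/
/-- If a compact metric space has infinitely many isolated points, then for every `ε > 0`
there is a continuous non-surjective self-map moving every point by less than `ε`. -/
theorem stmt_8 {X : Type*} [MetricSpace X] [CompactSpace X]
    (h : {x : X | IsOpen ({x} : Set X)}.Infinite) :
    ∀ ε > (0 : ℝ), ∃ f : X → X, Continuous f ∧ ¬ Function.Surjective f ∧
      ∀ x : X, dist (f x) x < ε := by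
  intro ε hε
  obtain ⟨a, ha⟩ := h.exists_accPt_principal
  -- find an isolated point x₀ ≠ a within ε of a
  rw [accPt_iff_nhds] at ha
  obtain ⟨x₀, ⟨hx₀ball, hx₀iso⟩, hx₀ne⟩ := ha (Metric.ball a ε) (Metric.ball_mem_nhds a hε)
  classical
  refine ⟨fun x => if x = x₀ then a else x, ?_, ?_, ?_⟩
  · apply Continuous.if
    · intro b hb
      have hfr : frontier ({x₀} : Set X) = ∅ :=
        (IsClopen.frontier_eq ⟨isClosed_singleton, hx₀iso⟩)
      rw [show {x : X | x = x₀} = ({x₀} : Set X) from rfl, hfr] at hb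
      exact absurd hb (Set.notMem_empty b)
    · exact continuous_const
    · exact continuous_id
  · intro hs
    obtain ⟨y, hy⟩ := hs x₀
    by_cases hyx : y = x₀
    · simp only [if_pos hyx] at hy; exact hx₀ne hy.symm
    · simp only [if_neg hyx] at hy; exact hyx hy
  · intro x
    by_cases hx : x = x₀
    · simp only [hx, if_pos rfl]
      rw [dist_comm]
      exact Metric.mem_ball.mp hx₀ball
    · simp [hx, hε]
end

section
/- Let X be a compact connected metric space that is chainable from a to b, let x ∈ X \ {a,b}, and let ε > 0 be such that the open ball B(x,ε) is contained in X \ {a,b}. Then a and b lie in different connected components of X \ B(x,ε); more precisely, X \ B(x,ε) is covered by two disjoint open sets U_a and U_b with a ∈ U_a and b ∈ U_b. -/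
/-- `X` is chainable from `a` to `b`: for every `δ > 0` there is a `δ`-chain
`C 0, …, C m` of nonempty open sets covering `X`, with consecutive (and only
consecutive) members meeting, `a ∈ C 0` and `b ∈ C m`. -/
def ChainableFromTo {X : Type*} [MetricSpace X] (a b : X) : Prop :=
  ∀ δ > (0 : ℝ), ∃ (m : ℕ) (C : ℕ → Set X),
    (∀ i ≤ m, (C i).Nonempty ∧ IsOpen (C i) ∧ Metric.diam (C i) < δ) ∧
    (∀ i ≤ m, ∀ j ≤ m, ((C i ∩ C j).Nonempty ↔ |(i : ℤ) - (j : ℤ)| ≤ 1)) ∧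
    (Set.univ : Set X) ⊆ (⋃ i ≤ m, C i) ∧ a ∈ C 0 ∧ b ∈ C m

/-- If a compact connected metric space is chainable from `a` to `b`, `x ∉ {a,b}` and
`B(x,ε) ⊆ X \ {a,b}`, then `X \ B(x,ε)` is covered by two disjoint open sets separating
`a` from `b`. -/
theorem stmt_13 {X : Type*} [MetricSpace X] [CompactSpace X] [ConnectedSpace X]
    (a b x : X) (hchain : ChainableFromTo a b)
    (ε : ℝ) (hε : 0 < ε) (hball : Metric.ball x ε ⊆ ({a, b} : Set X)ᶜ) :
    ∃ U V : Set X, IsOpen U ∧ IsOpen V ∧ Disjoint U V ∧ a ∈ U ∧ b ∈ V ∧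
      (Set.univ \ Metric.ball x ε : Set X) ⊆ U ∪ V := by
  obtain ⟨m, C, hC, hmeet, hcov, ha, hb⟩ := hchain ε hε
  have hanb : a ∉ Metric.ball x ε := fun h => (hball h) (Or.inl rfl)
  have hbnb : b ∉ Metric.ball x ε := fun h => (hball h) (Or.inr rfl)
  -- any link containing x is inside the ball
  have hsub : ∀ i ≤ m, x ∈ C i → C i ⊆ Metric.ball x ε := by
    intro i him hxi y hy
    have hbdd : Bornology.IsBounded (C i) := isCompact_univ.isBounded.subset (Set.subset_univ _)
    have := Metric.dist_le_diam_of_mem hbdd hy hxi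
    exact lt_of_le_of_lt this (hC i him).2.2
  -- x is in some link
  obtain ⟨k, hk⟩ : ∃ k, k ≤ m ∧ x ∈ C k := by
    have := hcov (Set.mem_univ x)
    simpa using this
  obtain ⟨hkm, hxk⟩ := hk
  have hk0 : 0 < k := by
    rcases Nat.eq_zero_or_pos k with h | h
    · subst h; exact absurd (hsub 0 hkm hxk ha) hanb
    · exact h
  have hkm' : k < m := by
    rcases lt_or_eq_of_le hkm with h | h
    · exact h
    · exact absurd (hsub k hkm hxk (h ▸ hb)) hbnb
  refine ⟨⋃ i ∈ Finset.range k, C i, ⋃ j ∈ Finset.Ioc k m, C j, ?_, ?_, ?_, ?_, ?_, ?_⟩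
  · exact isOpen_biUnion fun i hi => (hC i (le_trans (le_of_lt (Finset.mem_range.mp hi)) hkm)).2.1
  · exact isOpen_biUnion fun j hj => (hC j (Finset.mem_Ioc.mp hj).2).2.1
  · rw [Set.disjoint_left]
    rintro y hyU hyV
    simp only [Set.mem_iUnion, Finset.mem_range, Finset.mem_Ioc] at hyU hyV
    obtain ⟨i, hi, hyi⟩ := hyU
    obtain ⟨j, ⟨hj1, hj2⟩, hyj⟩ := hyV
    have := (hmeet i (le_trans (le_of_lt hi) hkm) j hj2).mp ⟨y, hyi, hyj⟩
    rw [abs_le] at this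
    omega
  · exact Set.mem_biUnion (Finset.mem_range.mpr hk0) ha
  · exact Set.mem_biUnion (Finset.mem_Ioc.mpr ⟨hkm', le_refl m⟩) hb
  · rintro y ⟨-, hyb⟩
    obtain ⟨i, hi, hyi⟩ : ∃ i, i ≤ m ∧ y ∈ C i := by simpa using hcov (Set.mem_univ y)
    have hik : i ≠ k := fun h => hyb (hsub k hkm hxk (h ▸ hyi))
    rcases lt_or_gt_of_ne hik with h | h
    · exact Or.inl (Set.mem_biUnion (Finset.mem_range.mpr h) hyi)
    · exact Or.inr (Set.mem_biUnion (Finset.mem_Ioc.mpr ⟨h, hi⟩) hyi)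
end

section
/- Let X be a compact metric space that is circularly chainable, and let T be a proper compact subset of X. Then T is quasi-chainable: for every ε > 0 there is a quasi-chain of mesh < ε covering T. -/
/-- `X` is circularly chainable: for every `ε > 0` there is a circular chain of mesh
`< ε` covering `X`: a finite sequence of nonempty open sets `C 0, …, C n` such that
`C i ∩ C j ≠ ∅` iff `|i - j| ≤ 1` or `{i,j} = {0,n}`. -/
def CircularlyChainable (X : Type*) [MetricSpace X] : Prop :=
  ∀ ε > (0 : ℝ), ∃ (n : ℕ) (C : ℕ → Set X),
    (∀ i ≤ n, (C i).Nonempty ∧ IsOpen (C i) ∧ Metric.diam (C i) < ε) ∧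
    (∀ i ≤ n, ∀ j ≤ n, ((C i ∩ C j).Nonempty ↔
      (|(i : ℤ) - (j : ℤ)| ≤ 1 ∨ (i = 0 ∧ j = n) ∨ (i = n ∧ j = 0)))) ∧
    (Set.univ : Set X) ⊆ ⋃ i ≤ n, C i

/-- A proper compact subset of a circularly chainable compact metric space is
quasi-chainable: for every `ε > 0` there is a quasi-chain of mesh `< ε` covering it. -/
theorem stmt_14 {X : Type*} [MetricSpace X] [CompactSpace X]
    (hX : CircularlyChainable X) (T : Set X) (hT : IsCompact T) (hproper : T ≠ Set.univ) :
    ∀ ε > (0 : ℝ), ∃ (n : ℕ) (C : ℕ → Set X),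
      (∀ i ≤ n, (C i).Nonempty ∧ IsOpen (C i) ∧ Metric.diam (C i) < ε) ∧
      (∀ i ≤ n, ∀ j ≤ n, 1 < |(i : ℤ) - (j : ℤ)| → C i ∩ C j = ∅) ∧
      T ⊆ ⋃ i ≤ n, C i := by
  intro ε hε
  rcases T.eq_empty_or_nonempty with hTe | hTne
  · -- trivial case: T empty
    obtain ⟨n, C, hmem, hint, hcov⟩ := hX ε hε
    refine ⟨0, fun _ => C 0, ?_, ?_, ?_⟩
    · intro i hi; interval_cases i; exact hmem 0 (Nat.zero_le _)
    · intro i hi j hj h; interval_cases i; interval_cases j; simp at h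
    · simp [hTe]
  · -- main case
    obtain ⟨x, hx⟩ := Set.ne_univ_iff_exists_notMem T |>.mp hproper
    have hd : 0 < Metric.infDist x T :=
      (hT.isClosed.notMem_iff_infDist_pos hTne).mp hx
    set δ := min ε (Metric.infDist x T) with hδdef
    have hδ : 0 < δ := lt_min hε hd
    obtain ⟨n, C, hmem, hint, hcov⟩ := hX δ hδ
    -- find k with x ∈ C k
    obtain ⟨k, hk, hxk⟩ := Set.mem_iUnion₂.mp (hcov (Set.mem_univ x))
    -- C k is disjoint from T
    have hCkT : ∀ t ∈ T, t ∉ C k := by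
      intro t ht htk
      have hb : Bornology.IsBounded (C k) :=
        (isCompact_univ.isBounded).subset (Set.subset_univ _)
      have h1 : dist x t ≤ Metric.diam (C k) := Metric.dist_le_diam_of_mem hb hxk htk
      have h2 : Metric.infDist x T ≤ dist x t := Metric.infDist_le_dist_of_mem ht
      have h3 : Metric.diam (C k) < δ := (hmem k hk).2.2
      have h4 : δ ≤ Metric.infDist x T := min_le_right _ _
      linarith
    -- n ≥ 1
    have hn1 : 1 ≤ n := by
      by_contra h
      push_neg at h
      interval_cases n
      obtain ⟨t, ht⟩ := hTne
      obtain ⟨j, hj, htj⟩ := Set.mem_iUnion₂.mp (hcov (Set.mem_univ t))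
      interval_cases j
      interval_cases k
      exact hCkT t ht htj
    -- rotated chain
    set σ : ℕ → ℕ := fun i => (i + k + 1) % (n + 1) with hσdef
    have hσle : ∀ i, σ i ≤ n := fun i => Nat.lt_succ_iff.mp (Nat.mod_lt _ (by omega))
    have hσval : ∀ i ≤ n - 1, (σ i = i + k + 1 ∧ i + k + 1 ≤ n) ∨
        (σ i = i + k - n ∧ n + 1 ≤ i + k + 1) := by
      intro i hi
      by_cases h : i + k + 1 ≤ n
      · exact Or.inl ⟨Nat.mod_eq_of_lt (by omega), h⟩
      · refine Or.inr ⟨?_, by omega⟩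
        have : (i + k + 1) % (n + 1) = (i + k + 1 - (n + 1)) % (n + 1) :=
          Nat.mod_eq_sub_mod (by omega)
        rw [hσdef]
        simp only []
        rw [this, Nat.mod_eq_of_lt (by omega)]
        omega
    refine ⟨n - 1, fun i => C (σ i), ?_, ?_, ?_⟩
    · intro i hi
      have := hmem (σ i) (hσle i)
      refine ⟨this.1, this.2.1, lt_of_lt_of_le this.2.2 (min_le_left _ _)⟩
    · intro i hi j hj habs
      by_contra hne
      rw [← Ne, ← Set.nonempty_iff_ne_empty] at hne
      have := (hint (σ i) (hσle i) (σ j) (hσle j)).mp hne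
      rcases hσval i hi with ⟨e1, e2⟩ | ⟨e1, e2⟩ <;>
        rcases hσval j hj with ⟨f1, f2⟩ | ⟨f1, f2⟩ <;>
      · rw [lt_abs] at habs
        rcases this with h | ⟨h1, h2⟩ | ⟨h1, h2⟩
        · rw [abs_le] at h; omega
        · omega
        · omega
    · intro t ht
      obtain ⟨j, hj, htj⟩ := Set.mem_iUnion₂.mp (hcov (Set.mem_univ t))
      have hjk : j ≠ k := fun h => hCkT t ht (h ▸ htj)
      refine Set.mem_iUnion₂.mpr ⟨if k < j then j - k - 1 else j + n - k, ?_, ?_⟩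
      · split <;> omega
      · have : σ (if k < j then j - k - 1 else j + n - k) = j := by
          rw [hσdef]
          split
          · simp only []
            rw [Nat.mod_eq_of_lt (by omega)]
            omega
          · have harg : j + n - k + k + 1 = j + (n + 1) := by omega
            simp only [harg, Nat.add_mod_right, Nat.mod_eq_of_lt (by omega : j < n + 1)]
        show t ∈ C (σ (if k < j then j - k - 1 else j + n - k))
        rw [this]; exact htj
end
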